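/- Let (A,·,α) be a regular finite-dimensional Hom-pre-Lie algebra and r ∈ A⊗A a Hom-s-matrix. Equip A* with the product ξ∘η = ad^⋆_{r^♯(ξ)}η − R^⋆_{r^♯(η)}ξ, so that (A*,∘,(α^{-1})*) is a Hom-pre-Lie algebra. Then (A, A*, φ*, ψ*) is a Hom-pre-Lie bialgebra, where ⟨φ*(x), ξ⊗η⟩ = ⟨x, ξ∘η⟩ (equivalently φ*(x) = (L^{-2}_x⊗α + α⊗ad^{-2}_x)(r)) and ⟨ψ*(ξ), x⊗y⟩ = ⟨ξ, x·y⟩. -/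

import Mathlib

open TensorProduct LinearMap Module

/-- Port helper: in current Lean/Mathlib, instance search no longer finds
`LinearMap.addCommGroup` for three-fold iterated linear maps into the scalar field
(a stuck instance metavariable for `AddCommGroup K`); this supplies exactly that instance. -/
instance addCommGroupLinDualH {K W X Y : Type*} [Field K] [AddCommGroup W] [Module K W]
    [AddCommGroup X] [Module K X] [AddCommGroup Y] [Module K Y] :
    AddCommGroup (W →ₗ[K] X →ₗ[K] Y →ₗ[K] K) :=
  @LinearMap.addCommGroup _ _ _ _ _ _ _ (@LinearMap.addCommGroup _ _ _ _ _ _ _ LinearMap.addCommGroup _ _ _) _ _ _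

section Defs

variable {K : Type*} [Field K]

section Basic
variable {A : Type*} [AddCommGroup A] [Module K A]
variable {B : Type*} [AddCommGroup B] [Module K B]
variable {V : Type*} [AddCommGroup V] [Module K V]

/-- A Hom-pre-Lie algebra structure. -/
def IsHomPreLie (m : A →ₗ[K] A →ₗ[K] A) (α : A →ₗ[K] A) : Prop :=
  (∀ x y, α (m x y) = m (α x) (α y)) ∧
  ∀ x y z, m (m x y) (α z) - m (α x) (m y z) = m (m y x) (α z) - m (α y) (m x z)

/-- A Hom-Lie algebra structure. -/
def IsHomLie (br : A →ₗ[K] A →ₗ[K] A) (φ : A →ₗ[K] A) : Prop :=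
  (∀ x y, br x y = - br y x) ∧
  (∀ x y, φ (br x y) = br (φ x) (φ y)) ∧
  ∀ x y z, br (φ x) (br y z) + br (φ y) (br z x) + br (φ z) (br x y) = 0

/-- A representation of a Hom-Lie algebra on `V` with respect to `β`. -/
def IsHomLieRep (br : A →ₗ[K] A →ₗ[K] A) (φ : A →ₗ[K] A)
    (β : Module.End K V) (ρ : A →ₗ[K] Module.End K V) : Prop :=
  (∀ x, ρ (φ x) * β = β * ρ x) ∧
  ∀ x y, ρ (br x y) * β = ρ (φ x) * ρ y - ρ (φ y) * ρ x

/-- A representation of a Hom-pre-Lie algebra on `V` with respect to `β`. -/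
def IsHomPreLieRep (m : A →ₗ[K] A →ₗ[K] A) (α : A →ₗ[K] A)
    (β : Module.End K V) (ρ μ : A →ₗ[K] Module.End K V) : Prop :=
  IsHomLieRep (m - m.flip) α β ρ ∧
  (∀ x, β * μ x = μ (α x) * β) ∧
  ∀ x y, μ (α y) * μ x - μ (m x y) * β = μ (α y) * ρ x - ρ (α x) * μ y

/-- A 1-cocycle of a Hom-Lie algebra with respect to a representation. -/
def IsHomLieCocycle (br : A →ₗ[K] A →ₗ[K] A) (φ : A →ₗ[K] A)
    (ρ : A →ₗ[K] Module.End K V) (δ : A →ₗ[K] V) : Prop :=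
  ∀ x y, δ (br x y) = ρ (φ x) (δ y) - ρ (φ y) (δ x)

/-- A matched pair of Hom-Lie algebras. -/
def IsHomLieMatchedPair (brA : A →ₗ[K] A →ₗ[K] A) (φA : A →ₗ[K] A)
    (brB : B →ₗ[K] B →ₗ[K] B) (φB : B →ₗ[K] B)
    (ρ : A →ₗ[K] Module.End K B) (ρ' : B →ₗ[K] Module.End K A) : Prop :=
  IsHomLie brA φA ∧ IsHomLie brB φB ∧
  IsHomLieRep brA φA φB ρ ∧ IsHomLieRep brB φB φA ρ' ∧
  (∀ x y x', ρ' (φB x') (brA x y) =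
    brA (ρ' x' x) (φA y) + brA (φA x) (ρ' x' y) + ρ' (ρ y x') (φA x) - ρ' (ρ x x') (φA y)) ∧
  ∀ x x' y', ρ (φA x) (brB x' y') =
    brB (ρ x x') (φB y') + brB (φB x') (ρ x y') + ρ (ρ' y' x) (φB x') - ρ (ρ' x' x) (φB y')

/-- A matched pair of Hom-pre-Lie algebras. -/
def IsHomPreLieMatchedPair (mA : A →ₗ[K] A →ₗ[K] A) (αA : A →ₗ[K] A)
    (mB : B →ₗ[K] B →ₗ[K] B) (αB : B →ₗ[K] B)
    (lA rA : A →ₗ[K] Module.End K B) (lB rB : B →ₗ[K] Module.End K A) : Prop :=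
  IsHomPreLie mA αA ∧ IsHomPreLie mB αB ∧
  IsHomPreLieRep mA αA αB lA rA ∧ IsHomPreLieRep mB αB αA lB rB ∧
  (∀ (x : A) (a b : B), rA (αA x) (mB a b - mB b a) =
    rA (lB b x) (αB a) - rA (lB a x) (αB b) + mB (αB a) (rA x b) - mB (αB b) (rA x a)) ∧
  (∀ (x : A) (a b : B), lA (αA x) (mB a b) =
    -(lA (lB a x - rB a x) (αB b)) + mB (lA x a - rA x a) (αB b)
      + rA (rB b x) (αB a) + mB (αB a) (lA x b)) ∧
  (∀ (a : B) (x y : A), rB (αB a) (mA x y - mA y x) =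
    rB (lA y a) (αA x) - rB (lA x a) (αA y) + mA (αA x) (rB a y) - mA (αA y) (rB a x)) ∧
  ∀ (a : B) (x y : A), lB (αB a) (mA x y) =
    -(lB (lA x a - rA x a) (αA y)) + mA (lB a x - rB a x) (αA y)
      + rB (rA y a) (αA x) + mA (αA x) (lB a y)

/-- A Hom-L-dendriform algebra structure. -/
def IsHomLDendriform (tr tl : A →ₗ[K] A →ₗ[K] A) (α : A →ₗ[K] A) : Prop :=
  (∀ x y, α (tr x y) = tr (α x) (α y)) ∧
  (∀ x y, α (tl x y) = tl (α x) (α y)) ∧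
  (∀ x y z, tr (tr x y) (α z) + tr (tl x y) (α z) + tr (α y) (tr x z)
      - tr (tl y x) (α z) - tr (tr y x) (α z) - tr (α x) (tr y z) = 0) ∧
  ∀ x y z, tl (tr x y) (α z) + tl (α y) (tr x z) + tl (α y) (tl x z)
      - tl (tl y x) (α z) - tr (α x) (tl y z) = 0

/-- A Hom-O-operator on a Hom-pre-Lie algebra with respect to a representation. -/
def IsHomOOperator (m : A →ₗ[K] A →ₗ[K] A) (α : A →ₗ[K] A)
    (β : V ≃ₗ[K] V) (ρ μ : A →ₗ[K] Module.End K V) (T : V →ₗ[K] A) : Prop :=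
  (∀ v, T (β v) = α (T v)) ∧
  ∀ u v, m (T u) (T v) = T (ρ (T (β.symm u)) v + μ (T (β.symm v)) u)

/-- A quadratic Hom-pre-Lie algebra. -/
def IsQuadraticHomPreLie (m : A →ₗ[K] A →ₗ[K] A) (α : A →ₗ[K] A)
    (ω : A →ₗ[K] A →ₗ[K] K) : Prop :=
  IsHomPreLie m α ∧
  (∀ x y, ω x y = - ω y x) ∧
  (∀ x, (∀ y, ω x y = 0) → x = 0) ∧
  (∀ x y, ω (α x) (α y) = ω x y) ∧
  ∀ x y z, ω (m x y) (α z) = - ω (α y) (m x z - m z x)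

/-- A Manin triple for Hom-pre-Lie algebras. -/
def IsManinTriple (m : A →ₗ[K] A →ₗ[K] A) (α : A →ₗ[K] A)
    (ω : A →ₗ[K] A →ₗ[K] K) (A1 A2 : Submodule K A) : Prop :=
  IsQuadraticHomPreLie m α ω ∧
  (∀ x ∈ A1, ∀ y ∈ A1, m x y ∈ A1) ∧ (∀ x ∈ A1, α x ∈ A1) ∧
  (∀ x ∈ A2, ∀ y ∈ A2, m x y ∈ A2) ∧ (∀ x ∈ A2, α x ∈ A2) ∧
  (∀ x ∈ A1, ∀ y ∈ A1, ω x y = 0) ∧ (∀ x ∈ A2, ∀ y ∈ A2, ω x y = 0) ∧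
  IsCompl A1 A2

/-- A Hessian structure on a Hom-pre-Lie algebra. -/
def IsHessian (m : A →ₗ[K] A →ₗ[K] A) (α : A →ₗ[K] A) (Bf : A →ₗ[K] A →ₗ[K] K) : Prop :=
  (∀ x y, Bf x y = Bf y x) ∧ (∀ x, (∀ y, Bf x y = 0) → x = 0) ∧
  (∀ x y, Bf (α x) (α y) = Bf x y) ∧
  ∀ x y z, Bf (m x y) (α z) - Bf (α x) (m y z) = Bf (m y x) (α z) - Bf (α y) (m x z)

end Basic

section Transpose
variable {X Y : Type*} [AddCommGroup X] [Module K X] [AddCommGroup Y] [Module K Y]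

/-- The transpose of linear maps, as a bundled linear map. -/
noncomputable def transposeH : (X →ₗ[K] Y) →ₗ[K] (Y →ₗ[K] K) →ₗ[K] (X →ₗ[K] K) :=
  (LinearMap.llcomp K X Y K).flip

@[simp] theorem transposeH_apply (f : X →ₗ[K] Y) (ξ : Y →ₗ[K] K) (x : X) :
    transposeH f ξ x = ξ (f x) := rfl

end Transpose

section StarOps
variable {A : Type*} [AddCommGroup A] [Module K A]

/-- The evaluation map into the double dual. -/
noncomputable def evalH : A →ₗ[K] ((A →ₗ[K] K) →ₗ[K] K) :=
  (LinearMap.id : (A →ₗ[K] K) →ₗ[K] (A →ₗ[K] K)).flip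

/-- The operator `L^⋆` : `⟨L^⋆_x ξ, y⟩ = -⟨ξ, α⁻¹(x) · α⁻²(y)⟩`. -/
noncomputable def Lstar (m : A →ₗ[K] A →ₗ[K] A) (α : A ≃ₗ[K] A) :
    A →ₗ[K] (A →ₗ[K] K) →ₗ[K] (A →ₗ[K] K) :=
  -(transposeH ∘ₗ
      (LinearMap.lcomp K A ((α ^ (-2 : ℤ) : A ≃ₗ[K] A) : A →ₗ[K] A)) ∘ₗ m ∘ₗ
      ((α⁻¹ : A ≃ₗ[K] A) : A →ₗ[K] A))

/-- The operator `R^⋆` : `⟨R^⋆_x ξ, y⟩ = -⟨ξ, α⁻²(y) · α⁻¹(x)⟩`. -/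
noncomputable def Rstar (m : A →ₗ[K] A →ₗ[K] A) (α : A ≃ₗ[K] A) :
    A →ₗ[K] (A →ₗ[K] K) →ₗ[K] (A →ₗ[K] K) :=
  -(transposeH ∘ₗ
      (LinearMap.lcomp K A ((α ^ (-2 : ℤ) : A ≃ₗ[K] A) : A →ₗ[K] A)) ∘ₗ m.flip ∘ₗ
      ((α⁻¹ : A ≃ₗ[K] A) : A →ₗ[K] A))

/-- The operator `ad^⋆ = L^⋆ - R^⋆`. -/
noncomputable def adStar (m : A →ₗ[K] A →ₗ[K] A) (α : A ≃ₗ[K] A) :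
    A →ₗ[K] (A →ₗ[K] K) →ₗ[K] (A →ₗ[K] K) :=
  Lstar m α - Rstar m α

variable [FiniteDimensional K A]

/-- The inverse of the double-dual evaluation isomorphism. -/
noncomputable def evalInvH : ((A →ₗ[K] K) →ₗ[K] K) →ₗ[K] A :=
  (Module.evalEquiv K A).symm.toLinearMap

/-- The operator `ℒ^⋆` : `⟨η, ℒ^⋆_ξ x⟩ = -⟨(α⁻¹)*(ξ) ∘ η, α²(x)⟩`. -/
noncomputable def Lcurly
    (mc : (A →ₗ[K] K) →ₗ[K] (A →ₗ[K] K) →ₗ[K] (A →ₗ[K] K))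
    (α : A ≃ₗ[K] A) : (A →ₗ[K] K) →ₗ[K] A →ₗ[K] A :=
  -((LinearMap.llcomp K A ((A →ₗ[K] K) →ₗ[K] K) A evalInvH) ∘ₗ
      (LinearMap.lcomp K ((A →ₗ[K] K) →ₗ[K] K)
        (evalH ∘ₗ ((α ^ (2 : ℤ) : A ≃ₗ[K] A) : A →ₗ[K] A))) ∘ₗ
      transposeH ∘ₗ mc ∘ₗ
      (transposeH ((α⁻¹ : A ≃ₗ[K] A) : A →ₗ[K] A)))

/-- The operator `ℛ^⋆` : `⟨η, ℛ^⋆_ξ x⟩ = -⟨η ∘ (α⁻¹)*(ξ), α²(x)⟩`. -/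
noncomputable def Rcurly
    (mc : (A →ₗ[K] K) →ₗ[K] (A →ₗ[K] K) →ₗ[K] (A →ₗ[K] K))
    (α : A ≃ₗ[K] A) : (A →ₗ[K] K) →ₗ[K] A →ₗ[K] A :=
  -((LinearMap.llcomp K A ((A →ₗ[K] K) →ₗ[K] K) A evalInvH) ∘ₗ
      (LinearMap.lcomp K ((A →ₗ[K] K) →ₗ[K] K)
        (evalH ∘ₗ ((α ^ (2 : ℤ) : A ≃ₗ[K] A) : A →ₗ[K] A))) ∘ₗ
      transposeH ∘ₗ mc.flip ∘ₗ
      (transposeH ((α⁻¹ : A ≃ₗ[K] A) : A →ₗ[K] A)))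

/-- The operator `𝔞𝔡^⋆ = ℒ^⋆ - ℛ^⋆`. -/
noncomputable def adCurly
    (mc : (A →ₗ[K] K) →ₗ[K] (A →ₗ[K] K) →ₗ[K] (A →ₗ[K] K))
    (α : A ≃ₗ[K] A) : (A →ₗ[K] K) →ₗ[K] A →ₗ[K] A :=
  Lcurly mc α - Rcurly mc α

end StarOps

section Tensor
variable {A : Type*} [AddCommGroup A] [Module K A]

/-- The pairing of `ξ ⊗ η` with elements of `A ⊗ A`. -/
noncomputable def tpair (ξ η : A →ₗ[K] K) : (A ⊗[K] A) →ₗ[K] K :=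
  (TensorProduct.lid K K).toLinearMap ∘ₗ TensorProduct.map ξ η

/-- The pairing of `x ⊗ y` with elements of `A* ⊗ A*`. -/
noncomputable def dpair (x y : A) : ((A →ₗ[K] K) ⊗[K] (A →ₗ[K] K)) →ₗ[K] K :=
  (TensorProduct.lid K K).toLinearMap ∘ₗ TensorProduct.map (evalH x) (evalH y)

/-- Pairing the first two tensor components of `A ⊗ A ⊗ A` with `ξ` and `η`. -/
noncomputable def pair12 (ξ η : A →ₗ[K] K) : (A ⊗[K] (A ⊗[K] A)) →ₗ[K] A :=
  (TensorProduct.lid K A).toLinearMap ∘ₗ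
    TensorProduct.map ξ ((TensorProduct.lid K A).toLinearMap ∘ₗ
      TensorProduct.map η LinearMap.id)

/-- The map `r^♯ : A* → A` associated to `r ∈ A ⊗ A`, `⟨r^♯(ξ), η⟩ = ⟨r, ξ ⊗ η⟩`. -/
noncomputable def rSharpL (r : A ⊗[K] A) : (A →ₗ[K] K) →ₗ[K] A :=
  ((LinearMap.llcomp K (A ⊗[K] A) (K ⊗[K] A) A (TensorProduct.lid K A).toLinearMap) ∘ₗ
    (LinearMap.rTensorHom A)).flip r

/-- The bilinear operation producing `[[r,r]]` out of `r ⊗ r`. -/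
noncomputable def homPreLieBB (m : A →ₗ[K] A →ₗ[K] A) (α : A →ₗ[K] A) :
    ((A ⊗[K] A) ⊗[K] (A ⊗[K] A)) →ₗ[K] (A ⊗[K] (A ⊗[K] A)) :=
  (TensorProduct.assoc K A A A).toLinearMap ∘ₗ
      (TensorProduct.map (TensorProduct.map α α) (TensorProduct.lift m)) ∘ₗ
      (TensorProduct.tensorTensorTensorComm K A A A A).toLinearMap
    - (TensorProduct.map α (TensorProduct.map (TensorProduct.lift (m.flip - m)) α)) ∘ₗ
      (LinearMap.lTensor A ((TensorProduct.assoc K A A A).symm.toLinearMap)) ∘ₗ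
      (TensorProduct.assoc K A A (A ⊗[K] A)).toLinearMap
    - (TensorProduct.map (TensorProduct.lift m)
        ((TensorProduct.map α α) ∘ₗ (TensorProduct.comm K A A).toLinearMap)) ∘ₗ
      (TensorProduct.tensorTensorTensorComm K A A A A).toLinearMap

/-- The element `[[r,r]] ∈ A ⊗ A ⊗ A`. -/
noncomputable def bracket2 (m : A →ₗ[K] A →ₗ[K] A) (α : A →ₗ[K] A) (r : A ⊗[K] A) :
    A ⊗[K] (A ⊗[K] A) :=
  homPreLieBB m α (r ⊗ₜ[K] r)

/-- A Hom-s-matrix in a Hom-pre-Lie algebra. -/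
def IsHomSMatrix {B : Type*} [AddCommGroup B] [Module K B]
    (mB : B →ₗ[K] B →ₗ[K] B) (γ : B ≃ₗ[K] B) (r : B ⊗[K] B) : Prop :=
  (TensorProduct.comm K B B) r = r ∧
  (∀ ξ, rSharpL r (ξ ∘ₗ ((γ⁻¹ : B ≃ₗ[K] B) : B →ₗ[K] B)) = γ (rSharpL r ξ)) ∧
  bracket2 mB (γ : B →ₗ[K] B) r = 0

/-- The representation `x ↦ F(x) ⊗ c + c ⊗ G(x)` on `Y ⊗ Y`. -/
noncomputable def tensorRep {Y : Type*} [AddCommGroup Y] [Module K Y]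
    (F G : A →ₗ[K] Y →ₗ[K] Y) (c : Y →ₗ[K] Y) :
    A →ₗ[K] Module.End K (Y ⊗[K] Y) :=
  (LinearMap.mulRight K (LinearMap.lTensor Y c)) ∘ₗ (LinearMap.rTensorHom Y) ∘ₗ F
    + (LinearMap.mulLeft K (LinearMap.rTensor Y c)) ∘ₗ (LinearMap.lTensorHom Y) ∘ₗ G

/-- The dual map `ρ^⋆` : `⟨ρ^⋆(x)ξ, u⟩ = -⟨(β⁻²)*(ξ), ρ(α(x))u⟩`. -/
noncomputable def rhoStar {V : Type*} [AddCommGroup V] [Module K V]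
    (α : A →ₗ[K] A) (β : V ≃ₗ[K] V) (ρ : A →ₗ[K] Module.End K V) :
    A →ₗ[K] (V →ₗ[K] K) →ₗ[K] (V →ₗ[K] K) :=
  -(transposeH ∘ₗ
      (LinearMap.mulLeft K (((β ^ (-2 : ℤ) : V ≃ₗ[K] V) : V →ₗ[K] V) : Module.End K V)) ∘ₗ
      ρ ∘ₗ α)

/-- The semidirect product Hom-pre-Lie product on `A × W`. -/
noncomputable def sdProduct {W : Type*} [AddCommGroup W] [Module K W]
    (m : A →ₗ[K] A →ₗ[K] A) (l r : A →ₗ[K] W →ₗ[K] W) :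
    (A × W) →ₗ[K] (A × W) →ₗ[K] (A × W) :=
  (m.compl₁₂ (LinearMap.fst K A W) (LinearMap.fst K A W)).compr₂ (LinearMap.inl K A W)
    + ((l.compl₁₂ (LinearMap.fst K A W) (LinearMap.snd K A W))
        + (r.compl₁₂ (LinearMap.fst K A W) (LinearMap.snd K A W)).flip).compr₂
      (LinearMap.inr K A W)

end Tensor

section Std
variable (K)
variable (A : Type*) [AddCommGroup A] [Module K A]

/-- The standard bilinear form `ω̄(x+ξ, y+η) = ⟨ξ,y⟩ - ⟨η,x⟩` on `A × A*`. -/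
noncomputable def stdOmega :
    (A × (A →ₗ[K] K)) →ₗ[K] (A × (A →ₗ[K] K)) →ₗ[K] K :=
  (LinearMap.id : (A →ₗ[K] K) →ₗ[K] (A →ₗ[K] K)).compl₁₂
      (LinearMap.snd K A (A →ₗ[K] K)) (LinearMap.fst K A (A →ₗ[K] K))
    - ((LinearMap.id : (A →ₗ[K] K) →ₗ[K] (A →ₗ[K] K)).compl₁₂
      (LinearMap.snd K A (A →ₗ[K] K)) (LinearMap.fst K A (A →ₗ[K] K))).flip

variable {K A}

/-- The standard product `⋄` on `A × A*`:
`(x+ξ) ⋄ (y+η) = x·y + 𝔞𝔡^⋆_ξ y - ℛ^⋆_η x + ξ∘η + ad^⋆_x η - R^⋆_y ξ`. -/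
noncomputable def stdDiamond [FiniteDimensional K A]
    (m : A →ₗ[K] A →ₗ[K] A) (α : A ≃ₗ[K] A)
    (mc : (A →ₗ[K] K) →ₗ[K] (A →ₗ[K] K) →ₗ[K] (A →ₗ[K] K)) :
    (A × (A →ₗ[K] K)) →ₗ[K] (A × (A →ₗ[K] K)) →ₗ[K] (A × (A →ₗ[K] K)) :=
  (m.compl₁₂ (LinearMap.fst K A (A →ₗ[K] K)) (LinearMap.fst K A (A →ₗ[K] K))
      + (adCurly mc α).compl₁₂ (LinearMap.snd K A (A →ₗ[K] K)) (LinearMap.fst K A (A →ₗ[K] K))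
      - ((Rcurly mc α).compl₁₂ (LinearMap.snd K A (A →ₗ[K] K))
          (LinearMap.fst K A (A →ₗ[K] K))).flip).compr₂
      (LinearMap.inl K A (A →ₗ[K] K))
    + (mc.compl₁₂ (LinearMap.snd K A (A →ₗ[K] K)) (LinearMap.snd K A (A →ₗ[K] K))
      + (adStar m α).compl₁₂ (LinearMap.fst K A (A →ₗ[K] K)) (LinearMap.snd K A (A →ₗ[K] K))
      - ((Rstar m α).compl₁₂ (LinearMap.fst K A (A →ₗ[K] K))
          (LinearMap.snd K A (A →ₗ[K] K))).flip).compr₂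
      (LinearMap.inr K A (A →ₗ[K] K))

end Std

section Bialg
variable {A : Type*} [AddCommGroup A] [Module K A]

/-- A Hom-pre-Lie bialgebra: the two 1-cocycle conditions on the
comultiplications `φ*` and `ψ*`. -/
def IsHomPreLieBialgebra (m : A →ₗ[K] A →ₗ[K] A) (α : A ≃ₗ[K] A)
    (mc : (A →ₗ[K] K) →ₗ[K] (A →ₗ[K] K) →ₗ[K] (A →ₗ[K] K))
    (φs : A →ₗ[K] A ⊗[K] A)
    (ψs : (A →ₗ[K] K) →ₗ[K] (A →ₗ[K] K) ⊗[K] (A →ₗ[K] K)) : Prop :=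
  IsHomLieCocycle (m - m.flip) (α : A →ₗ[K] A)
    (tensorRep (m ∘ₗ ((α ^ (-2 : ℤ) : A ≃ₗ[K] A) : A →ₗ[K] A))
      ((m - m.flip) ∘ₗ ((α ^ (-2 : ℤ) : A ≃ₗ[K] A) : A →ₗ[K] A))
      (α : A →ₗ[K] A)) φs ∧
  IsHomLieCocycle (mc - mc.flip) (transposeH ((α⁻¹ : A ≃ₗ[K] A) : A →ₗ[K] A))
    (tensorRep (mc ∘ₗ transposeH ((α ^ (2 : ℤ) : A ≃ₗ[K] A) : A →ₗ[K] A))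
      ((mc - mc.flip) ∘ₗ transposeH ((α ^ (2 : ℤ) : A ≃ₗ[K] A) : A →ₗ[K] A))
      (transposeH ((α⁻¹ : A ≃ₗ[K] A) : A →ₗ[K] A))) ψs

end Bialg

end Defs

/-! Write `S = r^♯`, so that `⟨ξ ∘ η, z⟩ = ⟨η, [α⁻²z, α⁻¹Sξ]⟩ + ⟨ξ, α⁻²z · α⁻¹Sη⟩`. Symmetry of
`r` makes `S` self-adjoint, `⟨S ξ, η⟩ = ⟨ξ, S η⟩`, and `α`-compatibility moves `α` across `S`.

* Paired with three covectors, `[[r,r]] = 0` says that `S` is multiplicative,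
  `S (ξ ∘ η) = S ξ · S η`; this transports the Hom-pre-Lie identity of `A` to `∘`.
* `φ*` is `x ↦ ρ(x) r` for the tensor product `ρ = L^{-2} ⊗ α + α ⊗ ad^{-2}` of two
  representations of `A^C`, and `(α ⊗ α) r = r`, so `φ*` is a coboundary, hence a cocycle.
* For `ψ*`, pair both sides with `x ⊗ y`: the transposes of the operators `ℒ^{-2}_ξ`, `𝔞𝔡^{-2}_ξ`
  are explicit operators on `A`, and the cocycle identity reduces to two instances of the
  Hom-pre-Lie identity and two of the self-adjointness of `S`.
-/

section Pairings
variable {K : Type*} [Field K] {A : Type*} [AddCommGroup A] [Module K A]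

@[simp] lemma tpair_tmul (ξ η : A →ₗ[K] K) (a b : A) : tpair ξ η (a ⊗ₜ[K] b) = ξ a * η b := by
  simp [tpair]

lemma rSharpL_apply (u : A ⊗[K] A) (ξ : A →ₗ[K] K) :
    rSharpL u ξ = TensorProduct.lid K A (ξ.rTensor A u) := rfl

lemma tpair_eq_apply_rSharpL (ξ η : A →ₗ[K] K) (u : A ⊗[K] A) :
    tpair ξ η u = η (rSharpL u ξ) := by
  rw [rSharpL_apply]
  induction u using TensorProduct.induction_on with
  | zero => simp
  | tmul a b => simp
  | add u v hu hv => simp [hu, hv]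

lemma tpair_comm (ξ η : A →ₗ[K] K) (u : A ⊗[K] A) :
    tpair ξ η (TensorProduct.comm K A A u) = tpair η ξ u := by
  induction u using TensorProduct.induction_on with
  | zero => simp
  | tmul a b => simp [mul_comm]
  | add u v hu hv => simp [hu, hv]

lemma tpair_map (ξ η : A →ₗ[K] K) (f g : A →ₗ[K] A) (t : A ⊗[K] A) :
    tpair ξ η (TensorProduct.map f g t) = tpair (ξ ∘ₗ f) (η ∘ₗ g) t := by
  induction t using TensorProduct.induction_on with
  | zero => simp
  | tmul a b => simp
  | add u v hu hv => simp [hu, hv]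

lemma tpair_coord {ι : Type*} (b : Basis ι K A) (i j : ι) (t : A ⊗[K] A) :
    tpair (b.coord i) (b.coord j) t = (b.tensorProduct b).repr t (i, j) := by
  induction t using TensorProduct.induction_on with
  | zero => simp
  | tmul x y => simp [Basis.tensorProduct_repr_tmul_apply, mul_comm]
  | add u v hu hv => simp [hu, hv]

lemma ext_tpair {t₁ t₂ : A ⊗[K] A} (h : ∀ ξ η : A →ₗ[K] K, tpair ξ η t₁ = tpair ξ η t₂) :
    t₁ = t₂ := by
  let b := Basis.ofVectorSpace K A
  refine (b.tensorProduct b).repr.injective (Finsupp.ext fun ⟨i, j⟩ => ?_)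
  simpa only [← tpair_coord] using h (b.coord i) (b.coord j)

@[simp] lemma evalH_apply (x : A) (ξ : A →ₗ[K] K) : evalH x ξ = ξ x := rfl

lemma dpair_map_of_comp {x y x' y' : A} {f g : (A →ₗ[K] K) →ₗ[K] (A →ₗ[K] K)}
    (hf : evalH x ∘ₗ f = evalH x') (hg : evalH y ∘ₗ g = evalH y')
    (t : (A →ₗ[K] K) ⊗[K] (A →ₗ[K] K)) :
    dpair x y (TensorProduct.map f g t) = dpair x' y' t := by
  change tpair _ _ _ = tpair _ _ _
  rw [tpair_map, hf, hg]

lemma ext_dpair [FiniteDimensional K A] {t₁ t₂ : (A →ₗ[K] K) ⊗[K] (A →ₗ[K] K)}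
    (h : ∀ x y : A, dpair x y t₁ = dpair x y t₂) : t₁ = t₂ := by
  refine ext_tpair fun f g => ?_
  obtain ⟨x, rfl⟩ := (Module.evalEquiv K A).surjective f
  obtain ⟨y, rfl⟩ := (Module.evalEquiv K A).surjective g
  exact h x y

end Pairings

section Representations
variable {K : Type*} [Field K] {A V : Type*} [AddCommGroup A] [Module K A]
  [AddCommGroup V] [Module K V] {br : A →ₗ[K] A →ₗ[K] A} {φ : A →ₗ[K] A}

lemma IsHomLieRep.comp {β : Module.End K V} {ρ : A →ₗ[K] Module.End K V}
    (hρ : IsHomLieRep br φ β ρ) {ψ : A →ₗ[K] A} (hψφ : ∀ x, ψ (φ x) = φ (ψ x))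
    (hψ : ∀ x y, ψ (br x y) = br (ψ x) (ψ y)) : IsHomLieRep br φ β (ρ ∘ₗ ψ) :=
  ⟨fun x => by simpa [hψφ] using hρ.1 (ψ x), fun x y => by simpa [hψφ, hψ] using hρ.2 (ψ x) (ψ y)⟩

lemma IsHomLieRep.apply_apply {β : Module.End K V} {ρ : A →ₗ[K] Module.End K V}
    (hρ : IsHomLieRep br φ β ρ) (x : A) (v : V) : ρ (φ x) (β v) = β (ρ x v) :=
  LinearMap.congr_fun (hρ.1 x) v

lemma IsHomLieRep.bracket_apply {β : Module.End K V} {ρ : A →ₗ[K] Module.End K V}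
    (hρ : IsHomLieRep br φ β ρ) (x y : A) (v : V) :
    ρ (br x y) (β v) = ρ (φ x) (ρ y v) - ρ (φ y) (ρ x v) :=
  LinearMap.congr_fun (hρ.2 x y) v

lemma tensorRep_apply (F G : A →ₗ[K] Module.End K V) (c : Module.End K V) (x : A) :
    tensorRep F G c x = TensorProduct.map (F x) c + TensorProduct.map c (G x) := by
  ext u v
  rfl

lemma isHomLieRep_tensorRep {c : Module.End K V} {F G : A →ₗ[K] Module.End K V}
    (hF : IsHomLieRep br φ c F) (hG : IsHomLieRep br φ c G) :
    IsHomLieRep br φ (TensorProduct.map c c) (tensorRep F G c) := by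
  refine ⟨fun x => ?_, fun x y => ?_⟩
  · simp only [tensorRep_apply, add_mul, mul_add, ← TensorProduct.map_mul, hF.1, hG.1]
  · ext u v
    simp only [tensorRep_apply, Module.End.mul_apply, LinearMap.sub_apply, LinearMap.add_apply,
      AlgebraTensorModule.curry_apply, curry_apply, LinearMap.restrictScalars_apply,
      map_add, TensorProduct.map_tmul, hF.apply_apply, hG.apply_apply,
      hF.bracket_apply, hG.bracket_apply, sub_tmul, tmul_sub]
    abel

end Representations

section HomPreLie
variable {K : Type*} [Field K] {A : Type*} [AddCommGroup A] [Module K A]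
  {m : A →ₗ[K] A →ₗ[K] A}

lemma zpow_neg_two_apply (α : A ≃ₗ[K] A) (z : A) :
    ((α ^ (-2 : ℤ) : A ≃ₗ[K] A) : A →ₗ[K] A) z = α.symm (α.symm z) := by
  simp [pow_two]

lemma zpow_two_apply (α : A ≃ₗ[K] A) (z : A) :
    ((α ^ (2 : ℤ) : A ≃ₗ[K] A) : A →ₗ[K] A) z = α (α z) := by
  simp [pow_two]

namespace IsHomPreLie

lemma map_mul {α : A ≃ₗ[K] A} (h : IsHomPreLie m α) (x y : A) :
    α (m x y) = m (α x) (α y) :=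
  h.1 x y

lemma symm_map_mul {α : A ≃ₗ[K] A} (h : IsHomPreLie m α) (x y : A) :
    α.symm (m x y) = m (α.symm x) (α.symm y) := by
  apply α.injective
  simpa using (h.1 (α.symm x) (α.symm y)).symm

variable {α : A →ₗ[K] A}

lemma isHomLieRep_mul (h : IsHomPreLie m α) : IsHomLieRep (m - m.flip) α α m := by
  refine ⟨fun x => LinearMap.ext fun z => (h.1 x z).symm, fun x y => LinearMap.ext fun z => ?_⟩
  simpa [sub_eq_sub_iff_sub_eq_sub] using h.2 x y z

lemma isHomLieRep_commutator (h : IsHomPreLie m α) :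
    IsHomLieRep (m - m.flip) α α (m - m.flip) := by
  refine ⟨fun x => LinearMap.ext fun z => ?_, fun x y => LinearMap.ext fun z => ?_⟩
  · simp [h.1]
  · simp only [Module.End.mul_apply, LinearMap.sub_apply, LinearMap.flip_apply, map_sub]
    linear_combination (norm := module) h.2 x y z + h.2 y z x + h.2 z x y

lemma isHomLieRep_comp_zpow_neg_two {α : A ≃ₗ[K] A} (h : IsHomPreLie m α) {V : Type*}
    [AddCommGroup V] [Module K V] {β : Module.End K V} {ρ : A →ₗ[K] Module.End K V}
    (hρ : IsHomLieRep (m - m.flip) α β ρ) :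
    IsHomLieRep (m - m.flip) α β (ρ ∘ₗ ((α ^ (-2 : ℤ) : A ≃ₗ[K] A) : A →ₗ[K] A)) :=
  hρ.comp (fun x => by simp only [zpow_neg_two_apply, LinearEquiv.coe_coe,
      LinearEquiv.symm_apply_apply, LinearEquiv.apply_symm_apply])
    (fun x y => by simp only [zpow_neg_two_apply, LinearMap.sub_apply, LinearMap.flip_apply,
      map_sub, h.symm_map_mul])

end IsHomPreLie
end HomPreLie

section SMatrix
variable {K : Type*} [Field K] {A : Type*} [AddCommGroup A] [Module K A]
  {m : A →ₗ[K] A →ₗ[K] A} {α : A ≃ₗ[K] A} {r : A ⊗[K] A}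

-- Subtraction of such maps goes through `addCommGroupLinDualH`, which `LinearMap.sub_apply`
-- does not match syntactically.
lemma sub_apply_trilinear {W X Y : Type*} [AddCommGroup W] [Module K W]
    [AddCommGroup X] [Module K X] [AddCommGroup Y] [Module K Y]
    (f g : W →ₗ[K] X →ₗ[K] Y →ₗ[K] K) (w : W) : (f - g) w = f w - g w := rfl

lemma Lstar_apply (x : A) (ξ : A →ₗ[K] K) (y : A) :
    Lstar m α x ξ y = -ξ (m (α.symm x) (α.symm (α.symm y))) := rfl

lemma Rstar_apply (x : A) (ξ : A →ₗ[K] K) (y : A) :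
    Rstar m α x ξ y = -ξ (m (α.symm (α.symm y)) (α.symm x)) := rfl

noncomputable def dualProduct (m : A →ₗ[K] A →ₗ[K] A) (α : A ≃ₗ[K] A) (r : A ⊗[K] A) :
    (A →ₗ[K] K) →ₗ[K] (A →ₗ[K] K) →ₗ[K] (A →ₗ[K] K) :=
  adStar m α ∘ₗ rSharpL r - (Rstar m α ∘ₗ rSharpL r).flip

lemma dualProduct_apply (ξ η : A →ₗ[K] K) (z : A) :
    dualProduct m α r ξ η z
      = η (m (α.symm (α.symm z)) (α.symm (rSharpL r ξ)))
        - η (m (α.symm (rSharpL r ξ)) (α.symm (α.symm z)))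
        + ξ (m (α.symm (α.symm z)) (α.symm (rSharpL r η))) := by
  simp only [dualProduct, adStar, sub_apply_trilinear, LinearMap.sub_apply, LinearMap.comp_apply,
    LinearMap.flip_apply, Lstar_apply, Rstar_apply]
  ring

lemma apply_rSharpL_comm (hr : TensorProduct.comm K A A r = r) (ξ η : A →ₗ[K] K) :
    η (rSharpL r ξ) = ξ (rSharpL r η) := by
  rw [← tpair_eq_apply_rSharpL, ← tpair_comm, hr, tpair_eq_apply_rSharpL]

lemma rSharpL_comp
    (hrα : ∀ ξ, rSharpL r (ξ ∘ₗ ((α⁻¹ : A ≃ₗ[K] A) : A →ₗ[K] A)) = α (rSharpL r ξ))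
    (ξ : A →ₗ[K] K) : rSharpL r (ξ ∘ₗ (α : A →ₗ[K] A)) = α.symm (rSharpL r ξ) := by
  rw [α.eq_symm_apply, ← hrα]
  congr 1
  ext z
  simp

lemma map_eq_self_of_rSharpL_comp
    (hrα : ∀ ξ, rSharpL r (ξ ∘ₗ ((α⁻¹ : A ≃ₗ[K] A) : A →ₗ[K] A)) = α (rSharpL r ξ)) :
    TensorProduct.map (α : A →ₗ[K] A) (α : A →ₗ[K] A) r = r := by
  refine ext_tpair fun ξ η => ?_
  rw [tpair_map, tpair_eq_apply_rSharpL, tpair_eq_apply_rSharpL, rSharpL_comp hrα]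
  simp

@[simp] lemma pair12_tmul (ξ η : A →ₗ[K] K) (x y z : A) :
    pair12 ξ η (x ⊗ₜ[K] (y ⊗ₜ[K] z)) = ξ x • η y • z := by
  simp [pair12, smul_comm (ξ x)]

lemma apply_pair12_homPreLieBB (α : A →ₗ[K] A) (ξ η ζ : A →ₗ[K] K) (u v : A ⊗[K] A) :
    ζ (pair12 ξ η (homPreLieBB m α (u ⊗ₜ[K] v))) =
      ζ (m (rSharpL u (ξ ∘ₗ α)) (rSharpL v (η ∘ₗ α)))
      - η (m (rSharpL (TensorProduct.comm K A A v) (ζ ∘ₗ α)) (rSharpL u (ξ ∘ₗ α)))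
      + η (m (rSharpL u (ξ ∘ₗ α)) (rSharpL (TensorProduct.comm K A A v) (ζ ∘ₗ α)))
      - ξ (m (rSharpL (TensorProduct.comm K A A u) (ζ ∘ₗ α))
            (rSharpL (TensorProduct.comm K A A v) (η ∘ₗ α))) := by
  simp only [rSharpL_apply]
  induction u using TensorProduct.induction_on with
  | zero => simp
  | add u₁ u₂ h₁ h₂ => simp only [add_tmul, map_add, LinearMap.add_apply, h₁, h₂]; ring
  | tmul a b =>
    induction v using TensorProduct.induction_on with
    | zero => simp
    | add v₁ v₂ h₁ h₂ => simp only [tmul_add, map_add, LinearMap.add_apply, h₁, h₂]; ring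
    | tmul c d =>
      simp [homPreLieBB, TensorProduct.tensorTensorTensorComm_tmul]
      ring

namespace IsHomSMatrix

lemma apply_mul_rSharpL_eq_zero (hs : IsHomSMatrix m α r) (ξ η ζ : A →ₗ[K] K) :
    ζ (m (α.symm (rSharpL r ξ)) (α.symm (rSharpL r η)))
      - η (m (α.symm (rSharpL r ζ)) (α.symm (rSharpL r ξ)))
      + η (m (α.symm (rSharpL r ξ)) (α.symm (rSharpL r ζ)))
      - ξ (m (α.symm (rSharpL r ζ)) (α.symm (rSharpL r η))) = 0 := by
  have key := apply_pair12_homPreLieBB (m := m) α ξ η ζ r r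
  rw [hs.1, ← bracket2, hs.2.2, map_zero, map_zero] at key
  simp only [rSharpL_comp hs.2.1] at key
  exact key.symm

lemma rSharpL_dualProduct (h : IsHomPreLie m α) (hs : IsHomSMatrix m α r) (ξ η : A →ₗ[K] K) :
    rSharpL r (dualProduct m α r ξ η) = m (rSharpL r ξ) (rSharpL r η) := by
  rw [← sub_eq_zero, ← Module.forall_dual_apply_eq_zero_iff K]
  intro μ
  have key := hs.apply_mul_rSharpL_eq_zero ξ η (μ ∘ₗ (α : A →ₗ[K] A))
  simp only [rSharpL_comp hs.2.1, LinearMap.comp_apply, LinearEquiv.coe_coe, h.map_mul,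
    LinearEquiv.apply_symm_apply] at key
  rw [map_sub, apply_rSharpL_comm hs.1 _ μ, dualProduct_apply]
  linear_combination -key

end IsHomSMatrix

lemma transposeH_eq_comp (f : A →ₗ[K] A) (ξ : A →ₗ[K] K) : transposeH f ξ = ξ ∘ₗ f := rfl

theorem isHomPreLie_dualProduct (h : IsHomPreLie m α) (hs : IsHomSMatrix m α r) :
    IsHomPreLie (dualProduct m α r) (transposeH ((α⁻¹ : A ≃ₗ[K] A) : A →ₗ[K] A)) := by
  refine ⟨fun ξ η => LinearMap.ext fun z => ?_, fun ξ η ζ => LinearMap.ext fun z => ?_⟩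
  · simp only [transposeH_eq_comp, LinearMap.comp_apply, dualProduct_apply, hs.2.1,
      LinearEquiv.coe_coe, LinearEquiv.coe_inv, h.symm_map_mul, LinearEquiv.symm_apply_apply]
  · simp only [transposeH_eq_comp, LinearMap.sub_apply, dualProduct_apply, hs.rSharpL_dualProduct h,
      hs.2.1, LinearMap.comp_apply, LinearEquiv.coe_coe, LinearEquiv.coe_inv, h.symm_map_mul,
      LinearEquiv.symm_apply_apply]
    have q1 := congrArg ζ (h.2 (α.symm (α.symm (rSharpL r ξ))) (α.symm (α.symm (rSharpL r η)))
      (α.symm (α.symm (α.symm (α.symm z)))))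
    have q2 := congrArg ζ (h.2 (α.symm (α.symm (α.symm (α.symm z))))
      (α.symm (α.symm (rSharpL r ξ))) (α.symm (α.symm (rSharpL r η))))
    have q3 := congrArg ζ (h.2 (α.symm (α.symm (rSharpL r η)))
      (α.symm (α.symm (α.symm (α.symm z)))) (α.symm (α.symm (rSharpL r ξ))))
    have q4 := congrArg η (h.2 (α.symm (α.symm (α.symm (α.symm z))))
      (α.symm (α.symm (rSharpL r ξ))) (α.symm (α.symm (rSharpL r ζ))))
    have q5 := congrArg ξ (h.2 (α.symm (α.symm (α.symm (α.symm z))))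
      (α.symm (α.symm (rSharpL r η))) (α.symm (α.symm (rSharpL r ζ))))
    simp only [map_sub, LinearEquiv.coe_coe, LinearEquiv.apply_symm_apply] at q1 q2 q3 q4 q5
    linear_combination -q1 - q2 - q3 - q4 + q5

end SMatrix

section Cocycles
variable {K : Type*} [Field K] {A : Type*} [AddCommGroup A] [Module K A]
  {m : A →ₗ[K] A →ₗ[K] A} {α : A ≃ₗ[K] A} {r : A ⊗[K] A}

lemma tpair_tensorRep_rSharpL (hr : TensorProduct.comm K A A r = r)
    (hrα : ∀ ξ, rSharpL r (ξ ∘ₗ ((α⁻¹ : A ≃ₗ[K] A) : A →ₗ[K] A)) = α (rSharpL r ξ))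
    (x : A) (ξ η : A →ₗ[K] K) :
    tpair ξ η (tensorRep (m ∘ₗ ((α ^ (-2 : ℤ) : A ≃ₗ[K] A) : A →ₗ[K] A))
        ((m - m.flip) ∘ₗ ((α ^ (-2 : ℤ) : A ≃ₗ[K] A) : A →ₗ[K] A)) (α : A →ₗ[K] A) x r)
      = dualProduct m α r ξ η x := by
  rw [tensorRep_apply, LinearMap.add_apply, map_add, tpair_map, tpair_map,
    tpair_eq_apply_rSharpL, tpair_eq_apply_rSharpL, apply_rSharpL_comm hr (ξ ∘ₗ _),
    rSharpL_comp hrα, rSharpL_comp hrα, dualProduct_apply]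
  simp only [LinearMap.comp_apply, zpow_neg_two_apply, LinearMap.sub_apply,
    LinearMap.flip_apply, map_sub]
  ring

theorem isHomLieCocycle_of_tpair_eq (h : IsHomPreLie m α) (hr : TensorProduct.comm K A A r = r)
    (hrα : ∀ ξ, rSharpL r (ξ ∘ₗ ((α⁻¹ : A ≃ₗ[K] A) : A →ₗ[K] A)) = α (rSharpL r ξ))
    {φs : A →ₗ[K] A ⊗[K] A} (hφ : ∀ x ξ η, tpair ξ η (φs x) = dualProduct m α r ξ η x) :
    IsHomLieCocycle (m - m.flip) (α : A →ₗ[K] A)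
      (tensorRep (m ∘ₗ ((α ^ (-2 : ℤ) : A ≃ₗ[K] A) : A →ₗ[K] A))
        ((m - m.flip) ∘ₗ ((α ^ (-2 : ℤ) : A ≃ₗ[K] A) : A →ₗ[K] A)) (α : A →ₗ[K] A)) φs := by
  have hρ := isHomLieRep_tensorRep (h.isHomLieRep_comp_zpow_neg_two h.isHomLieRep_mul)
    (h.isHomLieRep_comp_zpow_neg_two h.isHomLieRep_commutator)
  have hφr : ∀ x, φs x = tensorRep _ _ _ x r := fun x =>
    ext_tpair fun ξ η => by rw [hφ, tpair_tensorRep_rSharpL hr hrα]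
  intro x y
  have := hρ.bracket_apply x y r
  rwa [map_eq_self_of_rSharpL_comp hrα, ← hφr, ← hφr, ← hφr] at this

lemma transposeH_zpow_two_transposeH_inv (α : A ≃ₗ[K] A) (ξ : A →ₗ[K] K) :
    transposeH ((α ^ (2 : ℤ) : A ≃ₗ[K] A) : A →ₗ[K] A)
      (transposeH ((α⁻¹ : A ≃ₗ[K] A) : A →ₗ[K] A) ξ) = ξ ∘ₗ (α : A →ₗ[K] A) := by
  ext z
  simp only [transposeH_apply, LinearMap.comp_apply, zpow_two_apply, LinearEquiv.coe_inv,
    LinearEquiv.coe_coe, LinearEquiv.symm_apply_apply]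

lemma evalH_comp_dualProduct (h : IsHomPreLie m α) (hr : TensorProduct.comm K A A r = r)
    (hrα : ∀ ξ, rSharpL r (ξ ∘ₗ ((α⁻¹ : A ≃ₗ[K] A) : A →ₗ[K] A)) = α (rSharpL r ξ))
    (ξ : A →ₗ[K] K) (x : A) :
    evalH x ∘ₗ dualProduct m α r (ξ ∘ₗ (α : A →ₗ[K] A))
      = evalH (m (α.symm (α.symm x)) (α.symm (α.symm (rSharpL r ξ)))
          - m (α.symm (α.symm (rSharpL r ξ))) (α.symm (α.symm x))
          + rSharpL r (ξ ∘ₗ m (α.symm x))) := by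
  ext μ
  rw [LinearMap.comp_apply, evalH_apply, evalH_apply, dualProduct_apply, rSharpL_comp hrα,
    map_add, map_sub, apply_rSharpL_comm hr _ μ]
  simp [h.map_mul]

lemma evalH_comp_dualProduct_sub_flip (h : IsHomPreLie m α) (hr : TensorProduct.comm K A A r = r)
    (hrα : ∀ ξ, rSharpL r (ξ ∘ₗ ((α⁻¹ : A ≃ₗ[K] A) : A →ₗ[K] A)) = α (rSharpL r ξ))
    (ξ : A →ₗ[K] K) (y : A) :
    evalH y ∘ₗ (dualProduct m α r - (dualProduct m α r).flip) (ξ ∘ₗ (α : A →ₗ[K] A))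
      = evalH (rSharpL r (ξ ∘ₗ m.flip (α.symm y))
          - m (α.symm (α.symm (rSharpL r ξ))) (α.symm (α.symm y))) := by
  ext μ
  rw [LinearMap.comp_apply, evalH_apply, evalH_apply, sub_apply_trilinear, LinearMap.sub_apply,
    LinearMap.flip_apply, LinearMap.sub_apply, dualProduct_apply, dualProduct_apply,
    rSharpL_comp hrα, map_sub, apply_rSharpL_comm hr _ μ]
  simp only [LinearMap.coe_comp, LinearEquiv.coe_coe, Function.comp_apply, h.map_mul,
    LinearEquiv.apply_symm_apply, LinearMap.flip_apply]
  ring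

lemma dpair_tensorRep_dualProduct (h : IsHomPreLie m α) (hr : TensorProduct.comm K A A r = r)
    (hrα : ∀ ξ, rSharpL r (ξ ∘ₗ ((α⁻¹ : A ≃ₗ[K] A) : A →ₗ[K] A)) = α (rSharpL r ξ))
    (ξ : A →ₗ[K] K) (x y : A) (t : (A →ₗ[K] K) ⊗[K] (A →ₗ[K] K)) :
    dpair x y (tensorRep
        (dualProduct m α r ∘ₗ transposeH ((α ^ (2 : ℤ) : A ≃ₗ[K] A) : A →ₗ[K] A))
        ((dualProduct m α r - (dualProduct m α r).flip) ∘ₗ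
          transposeH ((α ^ (2 : ℤ) : A ≃ₗ[K] A) : A →ₗ[K] A))
        (transposeH ((α⁻¹ : A ≃ₗ[K] A) : A →ₗ[K] A))
        (transposeH ((α⁻¹ : A ≃ₗ[K] A) : A →ₗ[K] A) ξ) t)
      = dpair (m (α.symm (α.symm x)) (α.symm (α.symm (rSharpL r ξ)))
            - m (α.symm (α.symm (rSharpL r ξ))) (α.symm (α.symm x))
            + rSharpL r (ξ ∘ₗ m (α.symm x))) (α.symm y) t
        + dpair (α.symm x) (rSharpL r (ξ ∘ₗ m.flip (α.symm y))
            - m (α.symm (α.symm (rSharpL r ξ))) (α.symm (α.symm y))) t := by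
  rw [tensorRep_apply, LinearMap.add_apply, map_add, LinearMap.comp_apply, LinearMap.comp_apply,
    transposeH_zpow_two_transposeH_inv,
    dpair_map_of_comp (y' := α.symm y) (evalH_comp_dualProduct h hr hrα ξ x) rfl,
    dpair_map_of_comp (x' := α.symm x) rfl (evalH_comp_dualProduct_sub_flip h hr hrα ξ y)]

theorem isHomLieCocycle_of_dpair_eq [FiniteDimensional K A] (h : IsHomPreLie m α)
    (hr : TensorProduct.comm K A A r = r)
    (hrα : ∀ ξ, rSharpL r (ξ ∘ₗ ((α⁻¹ : A ≃ₗ[K] A) : A →ₗ[K] A)) = α (rSharpL r ξ))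
    {ψs : (A →ₗ[K] K) →ₗ[K] (A →ₗ[K] K) ⊗[K] (A →ₗ[K] K)}
    (hψ : ∀ ξ x y, dpair x y (ψs ξ) = ξ (m x y)) :
    IsHomLieCocycle (dualProduct m α r - (dualProduct m α r).flip)
      (transposeH ((α⁻¹ : A ≃ₗ[K] A) : A →ₗ[K] A))
      (tensorRep (dualProduct m α r ∘ₗ transposeH ((α ^ (2 : ℤ) : A ≃ₗ[K] A) : A →ₗ[K] A))
        ((dualProduct m α r - (dualProduct m α r).flip) ∘ₗ
          transposeH ((α ^ (2 : ℤ) : A ≃ₗ[K] A) : A →ₗ[K] A))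
        (transposeH ((α⁻¹ : A ≃ₗ[K] A) : A →ₗ[K] A))) ψs := by
  intro ξ η
  refine ext_dpair fun x y => ?_
  rw [map_sub, dpair_tensorRep_dualProduct h hr hrα, dpair_tensorRep_dualProduct h hr hrα]
  simp only [hψ, sub_apply_trilinear, LinearMap.sub_apply, LinearMap.add_apply,
    LinearMap.flip_apply, dualProduct_apply, map_add, map_sub, h.symm_map_mul]
  have f1 := apply_rSharpL_comm hr (ξ ∘ₗ m (α.symm x)) (η ∘ₗ m.flip (α.symm y))
  have f2 := apply_rSharpL_comm hr (η ∘ₗ m (α.symm x)) (ξ ∘ₗ m.flip (α.symm y))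
  simp only [LinearMap.comp_apply, LinearMap.flip_apply] at f1 f2
  have q1 := congrArg η
    (h.2 (α.symm (α.symm x)) (α.symm (α.symm (rSharpL r ξ))) (α.symm (α.symm y)))
  have q2 := congrArg ξ
    (h.2 (α.symm (α.symm x)) (α.symm (α.symm (rSharpL r η))) (α.symm (α.symm y)))
  simp only [map_sub, LinearEquiv.coe_coe, LinearEquiv.apply_symm_apply] at q1 q2
  linear_combination -f1 + f2 - q1 + q2

end Cocycles

theorem stmt_9 {K : Type*} [Field K] {A : Type*} [AddCommGroup A] [Module K A]
    [FiniteDimensional K A]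
    (m : A →ₗ[K] A →ₗ[K] A) (α : A ≃ₗ[K] A)
    (h : IsHomPreLie m (α : A →ₗ[K] A))
    (r : A ⊗[K] A)
    (hs : IsHomSMatrix m α r)
    (mc : (A →ₗ[K] K) →ₗ[K] (A →ₗ[K] K) →ₗ[K] (A →ₗ[K] K))
    (hmc : mc = (adStar m α) ∘ₗ rSharpL r - ((Rstar m α) ∘ₗ rSharpL r).flip)
    (φs : A →ₗ[K] A ⊗[K] A)
    (hφ : ∀ (x : A) (ξ η : (A →ₗ[K] K)), tpair ξ η (φs x) = mc ξ η x)
    (ψs : (A →ₗ[K] K) →ₗ[K] (A →ₗ[K] K) ⊗[K] (A →ₗ[K] K))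
    (hψ : ∀ (ξ : (A →ₗ[K] K)) (x y : A), dpair x y (ψs ξ) = ξ (m x y)) :
    IsHomPreLie mc (transposeH ((α⁻¹ : A ≃ₗ[K] A) : A →ₗ[K] A)) ∧ IsHomPreLieBialgebra m α mc φs ψs := by
  obtain rfl : mc = dualProduct m α r := hmc
  exact ⟨isHomPreLie_dualProduct h hs, isHomLieCocycle_of_tpair_eq h hs.1 hs.2.1 hφ,
    isHomLieCocycle_of_dpair_eq h hs.1 hs.2.1 hψ⟩
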